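/- arXiv:1809.08507 — 2 statements merged into one kernel-verified Lean document; each statement's English description precedes it below -/
import Mathlib

section
/- For each integer k ≥ 1, there exists an Eulerian orientation of the hypercube Q_{2k} that is strongly k-vertex-connected. -/
open Finset

variable {V : Type*} [Fintype V] [DecidableEq V]

/-- Out-degree of `v` in the digraph given by `D`. -/
def outDeg (D : V → V → Bool) (v : V) : ℕ :=
  (Finset.univ.filter (fun w => D v w = true)).card

/-- In-degree of `v` in the digraph given by `D`. -/
def inDeg (D : V → V → Bool) (v : V) : ℕ :=
  (Finset.univ.filter (fun w => D w v = true)).card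

/-- `D` is an orientation of the simple graph `G`: every arc of `D` is an edge of `G`,
and every edge of `G` receives exactly one of the two directions. -/
def IsOrientation (G : SimpleGraph V) (D : V → V → Bool) : Prop :=
  (∀ v w, D v w = true → G.Adj v w) ∧ ∀ v w, G.Adj v w → (D v w = true ↔ D w v = false)

/-- An Eulerian orientation: an orientation with in-degree equal to out-degree everywhere. -/
def IsEulerianOrientation (G : SimpleGraph V) (D : V → V → Bool) : Prop :=
  IsOrientation G D ∧ ∀ v, inDeg D v = outDeg D v

/-- Number of arcs of `D` going from `A` to `B`. -/
def arcs (D : V → V → Bool) (A B : Finset V) : ℕ :=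
  ((A ×ˢ B).filter (fun p => D p.1 p.2 = true)).card

/-- The digraph `D` is strongly connected on the vertex set `A`. -/
def StronglyConnectedOn (D : V → V → Bool) (A : Finset V) : Prop :=
  ∀ v ∈ A, ∀ w ∈ A,
    Relation.ReflTransGen (fun a b => a ∈ A ∧ b ∈ A ∧ D a b = true) v w

/-- The digraph `D` is strongly `k`-vertex-connected: it has at least `k+1` vertices and
deleting any set of at most `k-1` vertices leaves a strongly connected digraph. -/
def StronglyKConnected (k : ℕ) (D : V → V → Bool) : Prop :=
  k + 1 ≤ Fintype.card V ∧
    ∀ Z : Finset V, Z.card ≤ k - 1 → StronglyConnectedOn D (Finset.univ \ Z)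

/-- The `d`-dimensional hypercube graph on vertex set `Fin d → Bool`. -/
def cube (d : ℕ) : SimpleGraph (Fin d → Bool) where
  Adj v w := (Finset.univ.filter (fun i => v i ≠ w i)).card = 1
  symm := by
    constructor
    intro v w h
    have he : (Finset.univ.filter (fun i => w i ≠ v i))
        = (Finset.univ.filter (fun i => v i ≠ w i)) := by
      apply Finset.filter_congr; intro i _; simp [ne_comm]
    rw [he]; exact h
  loopless := by constructor; intro v h; simp at h

/-- Number of external neighbors of the vertex set `S` in `G`. -/
noncomputable def extNbrCard (G : SimpleGraph V) (S : Finset V) : ℕ :=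
  {w | w ∉ S ∧ ∃ v ∈ S, G.Adj v w}.ncard

/-- Harper's vertex-isoperimetric quantity `b_v(m, Q_{2k})`: the minimum number of external
neighbors over all vertex sets of size `m` in the hypercube `Q_{2k}`. -/
noncomputable def bv (k m : ℕ) : ℕ :=
  sInf {n | ∃ S : Finset (Fin (2 * k) → Bool), S.card = m ∧ extNbrCard (cube (2 * k)) S = n}

/-!
Pairing the coordinates of `Q_{2k}` and reading each pair through the Gray code
`00, 01, 11, 10` identifies `Q_{2k}` with the torus `C_4^k`. Orienting every four-cycle
cyclically gives each vertex `k` out-arcs (add `1` to one coordinate) and `k` in-arcs.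

This directed torus stays strongly connected after deleting at most `k - 1` vertices, by induction
on `k`: slice it along the last coordinate into layers, copies of the `(k-1)`-dimensional torus.
A layer containing at most `k - 2` deleted vertices is strongly connected by induction; a layer
containing more contains every deleted vertex, so the other layers are intact. One moves up a
layer along a column (fixed first `k - 1` coordinates) free of deleted vertices, which exists
because there are `4^(k-1) > k - 1` columns.
-/

open Function Relation

def ReachIn {α : Type*} (D : α → α → Bool) (A : Finset α) : α → α → Prop :=
  ReflTransGen fun a b => a ∈ A ∧ b ∈ A ∧ D a b = true

section Transport

variable {α β : Type*} [Fintype α] [Fintype β]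

theorem outDeg_comp_equiv (e : α ≃ β) (D : β → β → Bool) (v : α) :
    outDeg (fun a b => D (e a) (e b)) v = outDeg D (e v) :=
  card_equiv e (by simp)

theorem inDeg_comp_equiv (e : α ≃ β) (D : β → β → Bool) (v : α) :
    inDeg (fun a b => D (e a) (e b)) v = inDeg D (e v) :=
  card_equiv e (by simp)

theorem IsEulerianOrientation.comap {G : SimpleGraph α} {H : SimpleGraph β} (φ : G ≃g H)
    {D : β → β → Bool} (hD : IsEulerianOrientation H D) :
    IsEulerianOrientation G (fun a b => D (φ a) (φ b)) := by
  obtain ⟨⟨harc, hedge⟩, hdeg⟩ := hD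
  exact ⟨⟨fun v w h => φ.map_adj_iff.1 (harc _ _ h),
      fun v w h => hedge _ _ (φ.map_adj_iff.2 h)⟩,
    fun v => (inDeg_comp_equiv φ.toEquiv D v).trans
      ((hdeg _).trans (outDeg_comp_equiv φ.toEquiv D v).symm)⟩

theorem StronglyKConnected.comap [DecidableEq α] [DecidableEq β] {k : ℕ} (e : α ≃ β)
    {D : β → β → Bool} (hD : StronglyKConnected k D) :
    StronglyKConnected k (fun a b => D (e a) (e b)) := by
  refine ⟨(Fintype.card_congr e).symm ▸ hD.1, fun Z hZ v hv w hw => ?_⟩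
  have hmem : ∀ a, a ∈ univ \ Z ↔ e a ∈ univ \ Z.map e.toEmbedding := by simp
  have hreach := hD.2 (Z.map e.toEmbedding) (by rwa [card_map]) _ ((hmem v).1 hv) _ ((hmem w).1 hw)
  have hlift := hreach.lift e.symm
    (p := fun a b => a ∈ univ \ Z ∧ b ∈ univ \ Z ∧ D (e a) (e b))
    fun a b ⟨ha, hb, hab⟩ =>
      ⟨(hmem _).2 (by simpa using ha), (hmem _).2 (by simpa using hb), by simpa using hab⟩
  simpa [onFun] using hlift

end Transport

section Torus

variable {n k : ℕ}

def torusStep (x y : Fin k → ZMod n) : Prop :=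
  ∃ j, y = update x j (x j + 1)

instance : DecidableRel (torusStep (n := n) (k := k)) :=
  fun x y => inferInstanceAs (Decidable (∃ j, y = update x j (x j + 1)))

def torusDigraph (n k : ℕ) (x y : Fin k → ZMod n) : Bool :=
  decide (torusStep x y)

def torusGraph (n k : ℕ) : SimpleGraph (Fin k → ZMod n) :=
  SimpleGraph.fromRel torusStep

theorem torusStep_iff {x y : Fin k → ZMod n} :
    torusStep x y ↔ ∃ j, y j = x j + 1 ∧ ∀ i ≠ j, y i = x i :=
  exists_congr fun _ => eq_update_iff

theorem torusStep_iff_eq_update_sub {x y : Fin k → ZMod n} :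
    torusStep y x ↔ ∃ j, y = update x j (x j - 1) := by
  constructor <;> rintro ⟨j, rfl⟩ <;> exact ⟨j, by simp⟩

theorem torusStep.ne [Nontrivial (ZMod n)] {x y : Fin k → ZMod n} (h : torusStep x y) :
    x ≠ y := by
  obtain ⟨j, rfl⟩ := h
  intro h
  simpa using congrFun h j

theorem torusGraph_adj [Nontrivial (ZMod n)] {x y : Fin k → ZMod n} :
    (torusGraph n k).Adj x y ↔
      ∃ j, (y j = x j + 1 ∨ x j = y j + 1) ∧ ∀ i ≠ j, x i = y i := by
  rw [torusGraph, SimpleGraph.fromRel_adj]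
  constructor
  · rintro ⟨-, h | h⟩
    · obtain ⟨j, hj, h⟩ := torusStep_iff.1 h
      exact ⟨j, Or.inl hj, fun i hi => (h i hi).symm⟩
    · obtain ⟨j, hj, h⟩ := torusStep_iff.1 h
      exact ⟨j, Or.inr hj, h⟩
  · rintro ⟨j, hj | hj, h⟩
    · have hs : torusStep x y := torusStep_iff.2 ⟨j, hj, fun i hi => (h i hi).symm⟩
      exact ⟨hs.ne, Or.inl hs⟩
    · have hs : torusStep y x := torusStep_iff.2 ⟨j, hj, h⟩
      exact ⟨hs.ne.symm, Or.inr hs⟩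

theorem torusStep.not_torusStep (h2 : (2 : ZMod n) ≠ 0) {x y : Fin k → ZMod n}
    (h : torusStep x y) : ¬ torusStep y x := by
  obtain ⟨j, rfl⟩ := h
  rintro ⟨i, hi⟩
  have hj := congrFun hi j
  by_cases hij : j = i
  · subst hij
    simp [add_assoc, one_add_one_eq_two, h2] at hj
  · simp [update_of_ne hij] at hj
    exact h2 (by rw [← one_add_one_eq_two, hj, add_zero])

theorem torusStep.snoc {x y : Fin k → ZMod n} (h : torusStep x y) (c : ZMod n) :
    torusStep (Fin.snoc x c : Fin (k + 1) → ZMod n) (Fin.snoc y c) := by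
  obtain ⟨j, rfl⟩ := h
  exact ⟨j.castSucc, by simp [Fin.snoc_update]⟩

theorem card_image_update_add [Nontrivial (ZMod n)] (x : Fin k → ZMod n) {a : ZMod n}
    (ha : a ≠ 0) :
    #(univ.image fun j => update x j (x j + a)) = k := by
  rw [card_image_of_injective, card_univ, Fintype.card_fin]
  intro i j hij
  by_contra hne
  simpa [update_of_ne hne, ha] using congrFun hij i

theorem outDeg_torusDigraph [NeZero n] [Nontrivial (ZMod n)] (x : Fin k → ZMod n) :
    outDeg (torusDigraph n k) x = k := by
  have hout : univ.filter (fun y => torusDigraph n k x y = true)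
      = univ.image fun j => update x j (x j + 1) := by
    ext y
    rw [mem_filter, mem_image]
    simp only [mem_univ, true_and, torusDigraph, decide_eq_true_eq]
    exact exists_congr fun _ => eq_comm
  rw [outDeg, hout, card_image_update_add x one_ne_zero]

theorem inDeg_torusDigraph [NeZero n] [Nontrivial (ZMod n)] (x : Fin k → ZMod n) :
    inDeg (torusDigraph n k) x = k := by
  have hin : univ.filter (fun y => torusDigraph n k y x = true)
      = univ.image fun j => update x j (x j + -1) := by
    ext y
    rw [mem_filter, mem_image]
    simp only [mem_univ, true_and, torusDigraph, decide_eq_true_eq, torusStep_iff_eq_update_sub,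
      sub_eq_add_neg]
    exact exists_congr fun _ => eq_comm
  rw [inDeg, hin, card_image_update_add x (neg_ne_zero.2 one_ne_zero)]

theorem isEulerianOrientation_torusGraph [NeZero n] (h2 : (2 : ZMod n) ≠ 0) :
    IsEulerianOrientation (torusGraph n k) (torusDigraph n k) := by
  have : Nontrivial (ZMod n) := nontrivial_of_ne 2 0 h2
  refine ⟨⟨fun x y h => ?_, fun x y h => ?_⟩, fun x => ?_⟩
  · have h := of_decide_eq_true h
    exact (SimpleGraph.fromRel_adj _ _ _).2 ⟨h.ne, Or.inl h⟩
  · rcases (SimpleGraph.fromRel_adj _ _ _).1 h with ⟨-, h | h⟩ <;>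
      simp [torusDigraph, h, h.not_torusStep h2]
  · rw [inDeg_torusDigraph, outDeg_torusDigraph]

end Torus

section Connectivity

variable {n k : ℕ} [NeZero n]

def layer (Z : Finset (Fin (k + 1) → ZMod n)) (c : ZMod n) : Finset (Fin k → ZMod n) :=
  univ.filter fun p => Fin.snoc p c ∈ Z

variable {Z : Finset (Fin (k + 1) → ZMod n)}

theorem mem_layer {c : ZMod n} {p : Fin k → ZMod n} : p ∈ layer Z c ↔ Fin.snoc p c ∈ Z := by
  simp [layer]

theorem card_layer_add_card_layer_le (Z : Finset (Fin (k + 1) → ZMod n)) {c c' : ZMod n}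
    (h : c ≠ c') : #(layer Z c) + #(layer Z c') ≤ #Z := by
  rw [← card_image_of_injective (layer Z c) (Fin.snoc_left_injective (α := fun _ => ZMod n) c),
    ← card_image_of_injective (layer Z c') (Fin.snoc_left_injective (α := fun _ => ZMod n) c'),
    ← card_union_of_disjoint]
  · refine card_le_card (union_subset ?_ ?_) <;>
      exact image_subset_iff.2 fun p hp => mem_layer.1 hp
  · refine disjoint_left.2 ?_
    simp only [mem_image]
    rintro _ ⟨p, -, rfl⟩ ⟨q, -, hq⟩
    exact h (Fin.snoc_inj.1 hq).2.symm

theorem exists_forall_snoc_notMem [Nontrivial (ZMod n)] (hZ : #Z ≤ k) :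
    ∃ u : Fin k → ZMod n, ∀ c, Fin.snoc u c ∉ Z := by
  have hcard : #(Z.image Fin.init) < #(univ : Finset (Fin k → ZMod n)) :=
    calc #(Z.image Fin.init) ≤ #Z := card_image_le
      _ ≤ k := hZ
      _ < Fintype.card (ZMod n) ^ k := Nat.lt_pow_self Fintype.one_lt_card
      _ = #univ := by simp
  obtain ⟨u, -, hu⟩ := exists_mem_notMem_of_card_lt_card hcard
  exact ⟨u, fun c hc => hu (mem_image.2 ⟨_, hc, Fin.init_snoc _ _⟩)⟩

theorem reachIn_snoc_of_stronglyConnectedOn_layer {c : ZMod n}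
    (hc : StronglyConnectedOn (torusDigraph n k) (univ \ layer Z c)) {p q : Fin k → ZMod n}
    (hp : Fin.snoc p c ∉ Z) (hq : Fin.snoc q c ∉ Z) :
    ReachIn (torusDigraph n (k + 1)) (univ \ Z) (Fin.snoc p c) (Fin.snoc q c) := by
  refine (hc p (by simpa [mem_layer]) q (by simpa [mem_layer])).lift
    (fun p : Fin k → ZMod n => (Fin.snoc p c : Fin (k + 1) → ZMod n)) ?_
  rintro a b ⟨ha, hb, hab⟩
  exact ⟨by simpa [mem_layer] using ha, by simpa [mem_layer] using hb,
    decide_eq_true ((of_decide_eq_true hab).snoc c)⟩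

theorem reachIn_snoc_snoc_add_one {c : ZMod n} {p : Fin k → ZMod n} (hp : Fin.snoc p c ∉ Z)
    (hp' : Fin.snoc p (c + 1) ∉ Z) :
    ReachIn (torusDigraph n (k + 1)) (univ \ Z) (Fin.snoc p c) (Fin.snoc p (c + 1)) :=
  ReflTransGen.single ⟨by simpa using hp, by simpa using hp',
    decide_eq_true ⟨Fin.last k, by simp [Fin.update_snoc_last]⟩⟩

theorem reachIn_snoc_next_layer [Nontrivial (ZMod n)]
    (hIH : ∀ Z' : Finset (Fin k → ZMod n), #Z' ≤ k - 1 →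
      StronglyConnectedOn (torusDigraph n k) (univ \ Z'))
    (hZ : #Z ≤ k) {c : ZMod n} {p q : Fin k → ZMod n} (hp : Fin.snoc p c ∉ Z)
    (hq : Fin.snoc q (c + 1) ∉ Z) :
    ReachIn (torusDigraph n (k + 1)) (univ \ Z) (Fin.snoc p c) (Fin.snoc q (c + 1)) := by
  -- If one of the layers `c`, `c + 1` meets `Z` in more than `k - 1` points, the other misses `Z`.
  have hsum := card_layer_add_card_layer_le Z (left_ne_add.2 one_ne_zero : c ≠ c + 1)
  by_cases hc : #(layer Z c) ≤ k - 1 <;> by_cases hc' : #(layer Z (c + 1)) ≤ k - 1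
  · obtain ⟨u, hu⟩ := exists_forall_snoc_notMem hZ
    exact ((reachIn_snoc_of_stronglyConnectedOn_layer (hIH _ hc) hp (hu c)).trans
      (reachIn_snoc_snoc_add_one (hu c) (hu _))).trans
      (reachIn_snoc_of_stronglyConnectedOn_layer (hIH _ hc') (hu _) hq)
  · have hq' : Fin.snoc q c ∉ Z := by
      rw [← mem_layer, card_eq_zero.1 (by omega : #(layer Z c) = 0)]
      exact notMem_empty q
    exact (reachIn_snoc_of_stronglyConnectedOn_layer (hIH _ hc) hp hq').trans
      (reachIn_snoc_snoc_add_one hq' hq)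
  · have hp' : Fin.snoc p (c + 1) ∉ Z := by
      rw [← mem_layer, card_eq_zero.1 (by omega : #(layer Z (c + 1)) = 0)]
      exact notMem_empty p
    exact (reachIn_snoc_snoc_add_one hp hp').trans
      (reachIn_snoc_of_stronglyConnectedOn_layer (hIH _ hc') hp' hq)
  · omega

theorem reachIn_snoc_layer_add [Nontrivial (ZMod n)]
    (hIH : ∀ Z' : Finset (Fin k → ZMod n), #Z' ≤ k - 1 →
      StronglyConnectedOn (torusDigraph n k) (univ \ Z'))
    (hZ : #Z ≤ k) (t : ℕ) {c : ZMod n} {p q : Fin k → ZMod n} (hp : Fin.snoc p c ∉ Z)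
    (hq : Fin.snoc q (c + (t + 1)) ∉ Z) :
    ReachIn (torusDigraph n (k + 1)) (univ \ Z) (Fin.snoc p c) (Fin.snoc q (c + (t + 1))) := by
  induction t generalizing q with
  | zero =>
    rw [Nat.cast_zero, zero_add] at hq ⊢
    exact reachIn_snoc_next_layer hIH hZ hp hq
  | succ t ih =>
    obtain ⟨u, hu⟩ := exists_forall_snoc_notMem hZ
    rw [Nat.cast_succ, ← add_assoc c] at hq ⊢
    exact (ih (hu _)).trans (reachIn_snoc_next_layer hIH hZ (hu _) hq)

theorem stronglyConnectedOn_torusDigraph_sdiff [Nontrivial (ZMod n)] :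
    ∀ {k : ℕ} (Z : Finset (Fin k → ZMod n)), #Z ≤ k - 1 →
      StronglyConnectedOn (torusDigraph n k) (univ \ Z)
  | 0, _, _ => fun v _ w _ => Subsingleton.elim v w ▸ ReflTransGen.refl
  | k + 1, Z, hZ => by
    intro x hx y hy
    have hlast : y (Fin.last k) =
        x (Fin.last k) + ((y (Fin.last k) - x (Fin.last k) - 1).val + 1) := by
      rw [ZMod.natCast_zmod_val]; ring
    have hreach := reachIn_snoc_layer_add (Z := Z)
      (fun Z' => stronglyConnectedOn_torusDigraph_sdiff Z') (by omega)
      (y (Fin.last k) - x (Fin.last k) - 1).val (p := Fin.init x) (q := Fin.init y)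
      (by rw [Fin.snoc_init_self]; simpa using hx)
      (by rw [← hlast, Fin.snoc_init_self]; simpa using hy)
    rwa [← hlast, Fin.snoc_init_self, Fin.snoc_init_self] at hreach

theorem stronglyKConnected_torusDigraph [Nontrivial (ZMod n)] (k : ℕ) :
    StronglyKConnected k (torusDigraph n k) := by
  refine ⟨?_, stronglyConnectedOn_torusDigraph_sdiff⟩
  simpa [Nat.succ_le_iff] using Nat.lt_pow_self (n := k) (Fintype.one_lt_card (α := ZMod n))

end Connectivity

theorem Finset.sum_eq_one_iff_nat {ι : Type*} [Fintype ι] [DecidableEq ι] (f : ι → ℕ) :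
    ∑ i, f i = 1 ↔ ∃ j, f j = 1 ∧ ∀ i ≠ j, f i = 0 := by
  constructor
  · intro h
    obtain ⟨j, hj⟩ : ∃ j, f j ≠ 0 := by
      by_contra! h0
      simp [h0] at h
    have hle : f j ≤ 1 := h ▸ single_le_sum (fun _ _ => Nat.zero_le _) (mem_univ j)
    have hsplit := add_sum_erase univ f (mem_univ j)
    have hrest : ∑ i ∈ univ.erase j, f i = 0 := by omega
    exact ⟨j, by omega,
      fun i hi => sum_eq_zero_iff.1 hrest i (mem_erase.2 ⟨hi, mem_univ i⟩)⟩
  · rintro ⟨j, hj, h0⟩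
    rwa [sum_eq_single j (fun i _ hi => h0 i hi) (by simp)]

section Hamming

variable {ι κ β : Type*} [Fintype ι] [Fintype κ] [DecidableEq β]

theorem hammingDist_comp_equiv (e : ι ≃ κ) (x y : κ → β) :
    hammingDist (x ∘ e) (y ∘ e) = hammingDist x y :=
  card_equiv e (by simp)

theorem hammingDist_uncurry (x y : ι → κ → β) :
    hammingDist (uncurry x) (uncurry y) = ∑ i, hammingDist (x i) (y i) := by
  simp only [hammingDist, card_filter, Fintype.sum_prod_type, uncurry_apply_pair]
  rfl

end Hamming

def grayCode : ZMod 4 ≃ (Fin 2 → Bool) where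
  toFun := ![![false, false], ![false, true], ![true, true], ![true, false]]
  invFun b := if b 0 then (if b 1 then 2 else 3) else (if b 1 then 1 else 0)
  left_inv a := by revert a; decide
  right_inv b := by revert b; decide

theorem hammingDist_grayCode_eq_one_iff (a b : ZMod 4) :
    hammingDist (grayCode a) (grayCode b) = 1 ↔ b = a + 1 ∨ a = b + 1 := by
  revert a b
  decide

/-- `(j, b) ↦ 2 j + b`: the coordinates `2 j` and `2 j + 1` of the cube form the `j`-th pair. -/
def pairCoords (k : ℕ) : Fin k × Fin 2 ≃ Fin (2 * k) :=
  finProdFinEquiv.trans (finCongr (mul_comm k 2))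

def cubeEquivTorus (k : ℕ) : (Fin (2 * k) → Bool) ≃ (Fin k → ZMod 4) :=
  ((pairCoords k).arrowCongr (Equiv.refl Bool)).symm.trans
    ((Equiv.curry _ _ _).trans (Equiv.piCongrRight fun _ => grayCode.symm))

theorem uncurry_grayCode_cubeEquivTorus (k : ℕ) (v : Fin (2 * k) → Bool) :
    uncurry (fun j => grayCode (cubeEquivTorus k v j)) =
      v ∘ pairCoords k := by
  ext ⟨j, b⟩
  simp [cubeEquivTorus]

def cubeIsoTorusGraph (k : ℕ) : cube (2 * k) ≃g torusGraph 4 k where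
  toEquiv := cubeEquivTorus k
  map_rel_iff' {v w} := by
    have : Fact (1 < 4) := ⟨by norm_num⟩
    change _ ↔ hammingDist v w = 1
    rw [torusGraph_adj, ← hammingDist_comp_equiv (pairCoords k),
      ← uncurry_grayCode_cubeEquivTorus, ← uncurry_grayCode_cubeEquivTorus, hammingDist_uncurry,
      sum_eq_one_iff_nat]
    simp only [hammingDist_grayCode_eq_one_iff, hammingDist_eq_zero, grayCode.apply_eq_iff_eq]

theorem stmt3_general (k : ℕ) :
    ∃ D : (Fin (2 * k) → Bool) → (Fin (2 * k) → Bool) → Bool,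
      IsEulerianOrientation (cube (2 * k)) D ∧ StronglyKConnected k D := by
  have : Fact (1 < 4) := ⟨by norm_num⟩
  exact ⟨_, (isEulerianOrientation_torusGraph (by decide)).comap (cubeIsoTorusGraph k),
    (stronglyKConnected_torusDigraph k).comap (cubeIsoTorusGraph k).toEquiv⟩

/-- For each `k ≥ 1` there exists an Eulerian orientation of the
hypercube `Q_{2k}` that is strongly `k`-vertex-connected. -/
theorem stmt3 (k : ℕ) (hk : 1 ≤ k) :
    ∃ D : (Fin (2 * k) → Bool) → (Fin (2 * k) → Bool) → Bool,
      IsEulerianOrientation (cube (2 * k)) D ∧ StronglyKConnected k D :=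
  stmt3_general k
end

section
/- Let 1 ≤ r ≤ 2k and let M' be the set of the first m' elements in colexicographic order among the r-element subsets of {1,…,2k}, where r ≥ k+1 and m' ≥ 1. Then the lower shadow ∂M' (the set of (r−1)-subsets contained in some member of M') satisfies |∂M'| > |M'|. -/
open Finset

variable {V : Type*} [Fintype V] [DecidableEq V]

/-! Double counting the pairs `B ⊂ A` with `A ∈ 𝒜` (local LYM) gives
`|𝒜| r ≤ |∂𝒜| (n - r + 1)`, and for `2r > n + 1` the factor `n - r + 1` is smaller than `r`. -/

theorem Finset.card_lt_card_shadow_of_sized {α : Type*} [DecidableEq α] [Fintype α]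
    {𝒜 : Finset (Finset α)} {r : ℕ} (h𝒜 : (𝒜 : Set (Finset α)).Sized r) (hne : 𝒜.Nonempty)
    (hr : Fintype.card α + 1 < 2 * r) :
    #𝒜 < #𝒜.shadow := by
  obtain ⟨A, hA⟩ := hne
  have hrn : r ≤ Fintype.card α := h𝒜 hA ▸ A.card_le_univ
  have hpos : 0 < #𝒜 := card_pos.2 ⟨A, hA⟩
  refine Nat.lt_of_mul_lt_mul_right (a := Fintype.card α - r + 1) ?_
  calc #𝒜 * (Fintype.card α - r + 1) < #𝒜 * r := by gcongr; omega
    _ ≤ #𝒜.shadow * (Fintype.card α - r + 1) := card_mul_le_card_shadow_mul h𝒜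

theorem stmt10_general (k r m' : ℕ) (hr : k + 1 ≤ r)
    (hm' : 1 ≤ m') (M' : Finset (Finset (Fin (2 * k))))
    (hcard : ∀ A ∈ M', A.card = r) (hsize : M'.card = m') :
    M'.card < M'.shadow.card := by
  refine card_lt_card_shadow_of_sized (fun A hA => hcard A hA) (card_pos.1 (by omega)) ?_
  rw [Fintype.card_fin]
  omega

/-- If `M'` is an initial segment in colex order of the `r`-subsets of
`{1,…,2k}` with `r ≥ k+1` and `|M'| = m' ≥ 1`, then the lower shadow of `M'` is
strictly larger than `M'`. -/
theorem stmt10 (k r m' : ℕ) (hk : 1 ≤ k) (hr : k + 1 ≤ r) (hr2 : r ≤ 2 * k)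
    (hm' : 1 ≤ m') (M' : Finset (Finset (Fin (2 * k))))
    (hcard : ∀ A ∈ M', A.card = r) (hsize : M'.card = m')
    (hinit : ∀ A ∈ M', ∀ B : Finset (Fin (2 * k)), B.card = r →
      toColex B ≤ toColex A → B ∈ M') :
    M'.card < M'.shadow.card :=
  stmt10_general k r m' hr hm' M' hcard hsize
end
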